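/- Non-existence of a type-only encoding of full record subtyping into combined row and presence polymorphism: there is no global, compositional, type-only translation from λ_{[]}^{≤full} to λ_{[]}^{ρθ} that preserves typing. Specifically, for f₁ = λx^{[]}.x and f₂ = λx^{[]}.[] (both of type [] → []), type preservation forces the translated parameter type of f₁ to contain no type variables bound at its outer type abstraction except inside presence-absent label payloads; consequently the upcast f₁ ▷ ([ℓ:[]] → []) admits no type-only translation, since the label ℓ can neither be added to the parameter type by instantiation nor removed again in the body. -/

import Mathlib

namespace Stmt19

abbrev Label := ℕ

/-! ### The source calculus λ_{[]}^{≤full}: records with full structural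
subtyping. -/

/-- Source types. -/
inductive Ty : Type where
  | tvar : ℕ → Ty
  | arrow : Ty → Ty → Ty
  | record : List (Label × Ty) → Ty

/-- Full structural record subtyping: width record subtyping propagated
through all positions, contravariantly through function domains. -/
inductive Sub : Ty → Ty → Prop where
  | tvar (n : ℕ) : Sub (.tvar n) (.tvar n)
  | arrow {A A' B B'} : Sub A' A → Sub B B' → Sub (.arrow A B) (.arrow A' B')
  | record {R R'} :
      (∀ ℓ A', List.lookup ℓ R' = some A' → (List.lookup ℓ R).isSome) →
      (∀ ℓ A A', List.lookup ℓ R = some A → List.lookup ℓ R' = some A' →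
        Sub A A') →
      Sub (.record R) (.record R')

/-- Source terms. -/
inductive Tm : Type where
  | var : ℕ → Tm
  | lam : Ty → Tm → Tm
  | app : Tm → Tm → Tm
  | record : List (Label × Tm) → Tm
  | proj : Tm → Label → Tm
  | upcast : Tm → Ty → Tm

/-! Typing derivations of λ_{[]}^{≤full} as data. -/
mutual
inductive Deriv : List Ty → Tm → Ty → Type where
  | var {Γ n A} : Γ[n]? = some A → Deriv Γ (.var n) A
  | lam {Γ A B M} : Deriv (A :: Γ) M B → Deriv Γ (.lam A M) (.arrow A B)
  | app {Γ A B M N} : Deriv Γ M (.arrow A B) → Deriv Γ N A → Deriv Γ (.app M N) B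
  | record {Γ es R} : DerivRow Γ es R → Deriv Γ (.record es) (.record R)
  | proj {Γ R M ℓ A} : Deriv Γ M (.record R) → List.lookup ℓ R = some A →
      Deriv Γ (.proj M ℓ) A
  | upcast {Γ M A B} : Deriv Γ M A → Sub A B → Deriv Γ (.upcast M B) B
inductive DerivRow : List Ty → List (Label × Tm) → List (Label × Ty) → Type where
  | nil {Γ} : DerivRow Γ [] []
  | cons {Γ ℓ M A es R} : Deriv Γ M A → DerivRow Γ es R →
      DerivRow Γ ((ℓ, M) :: es) ((ℓ, A) :: R)
end

/-! ### The target calculus λ_{[]}^{ρθ}: records with both row and presence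
polymorphism. -/

/-- Presence annotations. -/
inductive Pre : Type where
  | abs : Pre
  | pres : Pre
  | pvar : ℕ → Pre

/-- Target types: record rows carry presence annotations and an optional row
variable tail; `rall L A` is ∀ρ^{Row_L}.A and `pall A` is ∀θ.A. -/
inductive RTy : Type where
  | tvar : ℕ → RTy
  | arrow : RTy → RTy → RTy
  | record : List (Label × Pre × RTy) → Option ℕ → RTy
  | rall : List Label → RTy → RTy
  | pall : RTy → RTy

abbrev RRow := List (Label × Pre × RTy) × Option ℕ

def shiftPre (c : ℕ) : Pre → Pre
  | .pvar n => if n < c then .pvar n else .pvar (n + 1)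
  | p => p

def substPreP (k : ℕ) (P : Pre) : Pre → Pre
  | .pvar n => if n = k then P else if n < k then .pvar n else .pvar (n - 1)
  | p => p

mutual
/-- Shift row variables ≥ c up by one. -/
def shiftRowTy (c : ℕ) : RTy → RTy
  | .tvar n => .tvar n
  | .arrow A B => .arrow (shiftRowTy c A) (shiftRowTy c B)
  | .record es r =>
      .record (shiftRowEs c es) (r.map (fun n => if n < c then n else n + 1))
  | .rall L A => .rall L (shiftRowTy (c + 1) A)
  | .pall A => .pall (shiftRowTy c A)
def shiftRowEs (c : ℕ) : List (Label × Pre × RTy) → List (Label × Pre × RTy)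
  | [] => []
  | (ℓ, P, A) :: es => (ℓ, P, shiftRowTy c A) :: shiftRowEs c es
end

mutual
/-- Shift presence variables ≥ c up by one. -/
def shiftPreTy (c : ℕ) : RTy → RTy
  | .tvar n => .tvar n
  | .arrow A B => .arrow (shiftPreTy c A) (shiftPreTy c B)
  | .record es r => .record (shiftPreEs c es) r
  | .rall L A => .rall L (shiftPreTy c A)
  | .pall A => .pall (shiftPreTy (c + 1) A)
def shiftPreEs (c : ℕ) : List (Label × Pre × RTy) → List (Label × Pre × RTy)
  | [] => []
  | (ℓ, P, A) :: es => (ℓ, shiftPre c P, shiftPreTy c A) :: shiftPreEs c es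
end

def shiftRowRRow (c : ℕ) (R : RRow) : RRow :=
  (shiftRowEs c R.1, R.2.map (fun n => if n < c then n else n + 1))

def shiftPreRRow (c : ℕ) (R : RRow) : RRow := (shiftPreEs c R.1, R.2)

mutual
/-- Substitute row R for row variable k. -/
def substRowTy (k : ℕ) (R : RRow) : RTy → RTy
  | .tvar n => .tvar n
  | .arrow A B => .arrow (substRowTy k R A) (substRowTy k R B)
  | .record es r =>
      let es' := substRowEs k R es
      match r with
      | none => .record es' none
      | some n =>
        if n = k then .record (es' ++ R.1) R.2
        else if n < k then .record es' (some n)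
        else .record es' (some (n - 1))
  | .rall L A => .rall L (substRowTy (k + 1) (shiftRowRRow 0 R) A)
  | .pall A => .pall (substRowTy k (shiftPreRRow 0 R) A)
def substRowEs (k : ℕ) (R : RRow) : List (Label × Pre × RTy) → List (Label × Pre × RTy)
  | [] => []
  | (ℓ, P, A) :: es => (ℓ, P, substRowTy k R A) :: substRowEs k R es
end

mutual
/-- Substitute presence type P for presence variable k. -/
def substPreTy (k : ℕ) (P : Pre) : RTy → RTy
  | .tvar n => .tvar n
  | .arrow A B => .arrow (substPreTy k P A) (substPreTy k P B)
  | .record es r => .record (substPreEs k P es) r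
  | .rall L A => .rall L (substPreTy k P A)
  | .pall A => .pall (substPreTy (k + 1) (shiftPre 0 P) A)
def substPreEs (k : ℕ) (P : Pre) : List (Label × Pre × RTy) → List (Label × Pre × RTy)
  | [] => []
  | (ℓ, Q, A) :: es => (ℓ, substPreP k P Q, substPreTy k P A) :: substPreEs k P es
end

/-- Type equivalence: rows are compared ignoring label order and absent
labels. -/
inductive TyEquiv : RTy → RTy → Prop where
  | refl (A) : TyEquiv A A
  | symm {A B} : TyEquiv A B → TyEquiv B A
  | trans {A B C} : TyEquiv A B → TyEquiv B C → TyEquiv A C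
  | arrow {A A' B B'} : TyEquiv A A' → TyEquiv B B' →
      TyEquiv (.arrow A B) (.arrow A' B')
  | rall {L A A'} : TyEquiv A A' → TyEquiv (.rall L A) (.rall L A')
  | pall {A A'} : TyEquiv A A' → TyEquiv (.pall A) (.pall A')
  | recordCongr {es es' r} :
      es.map (fun q => (q.1, q.2.1)) = es'.map (fun q => (q.1, q.2.1)) →
      (∀ (i : ℕ) p q, es[i]? = some p → es'[i]? = some q →
        TyEquiv p.2.2 q.2.2) →
      TyEquiv (.record es r) (.record es' r)
  | recordPerm {es es' r} : List.Perm es es' →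
      TyEquiv (.record es r) (.record es' r)
  | recordAbsent {es₁ es₂ ℓ A r} :
      TyEquiv (.record (es₁ ++ (ℓ, Pre.abs, A) :: es₂) r) (.record (es₁ ++ es₂) r)

/-- Target terms (record constructions carry a type annotation). -/
inductive RTm : Type where
  | var : ℕ → RTm
  | lam : RTy → RTm → RTm
  | app : RTm → RTm → RTm
  | record : List (Label × RTm) → RTy → RTm
  | proj : RTm → Label → RTm
  | rlam : List Label → RTm → RTm
  | rapp : RTm → RRow → RTm
  | plam : RTm → RTm
  | papp : RTm → Pre → RTm

/-- Typing of λ_{[]}^{ρθ}. -/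
inductive RHasTy : List RTy → RTm → RTy → Prop where
  | var {Γ n A} : Γ[n]? = some A → RHasTy Γ (.var n) A
  | lam {Γ A B M} : RHasTy (A :: Γ) M B → RHasTy Γ (.lam A M) (.arrow A B)
  | app {Γ A B M N} : RHasTy Γ M (.arrow A B) → RHasTy Γ N A →
      RHasTy Γ (.app M N) B
  | record {Γ} {es : List (Label × RTm)} {res : List (Label × Pre × RTy)} :
      es.map Prod.fst = res.map Prod.fst →
      (∀ (i : ℕ) p q, es[i]? = some p → res[i]? = some q →
        RHasTy Γ (Prod.snd p) (Prod.snd (Prod.snd q))) →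
      RHasTy Γ (.record es (.record res none)) (.record res none)
  | proj {Γ res r M ℓ A} : RHasTy Γ M (.record res r) →
      List.lookup ℓ res = some (Pre.pres, A) →
      RHasTy Γ (.proj M ℓ) A
  | rlam {Γ L M A} : RHasTy (Γ.map (shiftRowTy 0)) M A →
      RHasTy Γ (.rlam L M) (.rall L A)
  | rapp {Γ L M A R} : RHasTy Γ M (.rall L A) →
      RHasTy Γ (.rapp M R) (substRowTy 0 R A)
  | plam {Γ M A} : RHasTy (Γ.map (shiftPreTy 0)) M A →
      RHasTy Γ (.plam M) (.pall A)
  | papp {Γ M A P} : RHasTy Γ M (.pall A) → RHasTy Γ (.papp M P) (substPreTy 0 P A)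
  | conv {Γ M A A'} : RHasTy Γ M A → TyEquiv A A' → RHasTy Γ M A'

/-! ### Untyped terms and erasure. -/

inductive UTm : Type where
  | var : ℕ → UTm
  | lam : UTm → UTm
  | app : UTm → UTm → UTm
  | record : List (Label × UTm) → UTm
  | proj : UTm → Label → UTm

mutual
def eraseS : Tm → UTm
  | .var n => .var n
  | .lam _ M => .lam (eraseS M)
  | .app M N => .app (eraseS M) (eraseS N)
  | .record es => .record (eraseSEs es)
  | .proj M ℓ => .proj (eraseS M) ℓ
  | .upcast M _ => eraseS M
def eraseSEs : List (Label × Tm) → List (Label × UTm)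
  | [] => []
  | (ℓ, M) :: es => (ℓ, eraseS M) :: eraseSEs es
end

mutual
def eraseT : RTm → UTm
  | .var n => .var n
  | .lam _ M => .lam (eraseT M)
  | .app M N => .app (eraseT M) (eraseT N)
  | .record es _ => .record (eraseTEs es)
  | .proj M ℓ => .proj (eraseT M) ℓ
  | .rlam _ M => eraseT M
  | .rapp M _ => eraseT M
  | .plam M => eraseT M
  | .papp M _ => eraseT M
def eraseTEs : List (Label × RTm) → List (Label × UTm)
  | [] => []
  | (ℓ, M) :: es => (ℓ, eraseT M) :: eraseTEs es
end

/-!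
Target types are interpreted in ground types `GTy`, in which a record type is just the set of labels
it makes present and a quantifier is the intersection of its closed instances; erased target terms
are typed over ground types by `GHasTy`, and every target typing is sound for it. Let `t`, `e`, `u`
interpret the translations of `[] → []`, `[]` and `[ℓ:[]] → []`. As both `λx.x` and `λx.[]` have
type `t`, no arrow instance of `t` has a domain all of whose records contain `ℓ`. Applying a
function of type `t` to `[] : e` yields an arrow instance of `t` whose domain has only empty
records, and the upcast together with `λx.x.ℓ : u` yields one whose domain has a record
containing `ℓ`. Descending through the quantifiers of `t`, the second instance can be moved into
the branch of the first unless `ℓ` is made present by the variable being instantiated, and then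
every record of its domain contains `ℓ`, a contradiction either way.
-/

section IndexOps

variable {α : Type*}

def insertAt (k : ℕ) (x : α) (f : ℕ → α) (n : ℕ) : α :=
  if n = k then x else if n < k then f n else f (n - 1)

def skipAt (c : ℕ) (f : ℕ → α) (n : ℕ) : α := f (if n < c then n else n + 1)

@[simp] lemma insertAt_self (k : ℕ) (x : α) (f : ℕ → α) : insertAt k x f k = x := by
  simp [insertAt]

lemma insertAt_of_ne {k n : ℕ} (h : n ≠ k) (x y : α) (f : ℕ → α) :
    insertAt k x f n = insertAt k y f n := by
  simp [insertAt, h]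

@[simp] lemma skipAt_insertAt (k : ℕ) (x : α) (f : ℕ → α) : skipAt k (insertAt k x f) = f := by
  funext n
  unfold skipAt insertAt
  split_ifs <;> first | rfl | omega

lemma insertAt_zero_insertAt (k : ℕ) (x y : α) (f : ℕ → α) :
    insertAt 0 y (insertAt k x f) = insertAt (k + 1) x (insertAt 0 y f) := by
  funext n
  unfold insertAt
  split_ifs <;> first | rfl | omega

lemma insertAt_zero_skipAt (c : ℕ) (y : α) (f : ℕ → α) :
    insertAt 0 y (skipAt c f) = skipAt (c + 1) (insertAt 0 y f) := by
  funext n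
  rcases n with _ | n
  · simp [insertAt, skipAt]
  · simp only [insertAt, skipAt]
    split_ifs <;> first | rfl | omega

end IndexOps

/-! ### Ground types -/

inductive GTy : Type where
  | var : ℕ → GTy
  | arr : GTy → GTy → GTy
  | recd : (Label → Bool) → GTy
  | all : ((Label → Bool) → GTy) → GTy

namespace GTy

def IsLeaf : GTy → Prop
  | all _ => False
  | _ => True

inductive InstStep : GTy → GTy → Prop where
  | inst (F : (Label → Bool) → GTy) (ρ : Label → Bool) : InstStep (all F) (F ρ)

abbrev Inst : GTy → GTy → Prop := Relation.ReflTransGen InstStep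

lemma Inst.eq_of_isLeaf {g g' : GTy} (h : Inst g g') (hg : g.IsLeaf) : g' = g := by
  rcases h.cases_head with h | ⟨_, ⟨⟩, _⟩
  · exact h.symm
  · exact hg.elim

lemma Inst.head_all {F : (Label → Bool) → GTy} {ρ : Label → Bool} {g : GTy} (h : Inst (F ρ) g) :
    Inst (all F) g :=
  .head (.inst F ρ) h

lemma Inst.exists_of_all {F : (Label → Bool) → GTy} {g : GTy} (h : Inst (all F) g)
    (hg : g.IsLeaf) : ∃ ρ, Inst (F ρ) g := by
  rcases h.cases_head with rfl | ⟨_, ⟨⟩, h⟩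
  · exact hg.elim
  · exact ⟨_, h⟩

lemma exists_inst_isLeaf : ∀ g : GTy, ∃ g', Inst g g' ∧ g'.IsLeaf
  | var _ | arr _ _ | recd _ => ⟨_, .refl, trivial⟩
  | all F =>
    have ⟨g', h, hg'⟩ := exists_inst_isLeaf (F fun _ => false)
    ⟨g', h.head_all, hg'⟩

def AllRecordsHave (ℓ : Label) (g : GTy) : Prop := ∀ f, Inst g (recd f) → f ℓ = true

def SomeRecordHas (ℓ : Label) (g : GTy) : Prop := ∃ f, Inst g (recd f) ∧ f ℓ = true

def OnlyEmptyRecords (g : GTy) : Prop := ∀ g', Inst g g' → g'.IsLeaf → g' = recd fun _ => false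

variable {ℓ : Label}

lemma allRecordsHave_recd {f : Label → Bool} (h : f ℓ = true) : AllRecordsHave ℓ (recd f) :=
  fun _ hf => by cases hf.eq_of_isLeaf trivial; exact h

lemma allRecordsHave_all {F : (Label → Bool) → GTy} (h : ∀ ρ, AllRecordsHave ℓ (F ρ)) :
    AllRecordsHave ℓ (all F) := fun f hf =>
  have ⟨ρ, hρ⟩ := hf.exists_of_all trivial
  h ρ f hρ

lemma someRecordHas_recd {f : Label → Bool} : SomeRecordHas ℓ (recd f) ↔ f ℓ = true :=
  ⟨fun ⟨_, hf, h⟩ => by cases hf.eq_of_isLeaf trivial; exact h, fun h => ⟨f, .refl, h⟩⟩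

lemma someRecordHas_all {F : (Label → Bool) → GTy} :
    SomeRecordHas ℓ (all F) ↔ ∃ ρ, SomeRecordHas ℓ (F ρ) :=
  ⟨fun ⟨f, hf, h⟩ => have ⟨ρ, hρ⟩ := hf.exists_of_all trivial; ⟨ρ, f, hρ, h⟩,
   fun ⟨_, f, hf, h⟩ => ⟨f, hf.head_all, h⟩⟩

lemma OnlyEmptyRecords.not_someRecordHas {g : GTy} (h : OnlyEmptyRecords g) :
    ¬ SomeRecordHas ℓ g := fun ⟨_, hf, hℓ⟩ => by
  cases h _ hf trivial
  cases hℓ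

/-- The types that `GHasTy` can give to a variable of type `x`. -/
inductive GenInst (x : GTy) : GTy → Prop where
  | refl : GenInst x x
  | inst {F} (ρ : Label → Bool) : GenInst x (all F) → GenInst x (F ρ)
  | gen {F} : (∀ ρ, GenInst x (F ρ)) → GenInst x (all F)

lemma GenInst.inst_of_isLeaf {x g g' : GTy} (h : GenInst x g) (hg : Inst g g')
    (hg' : g'.IsLeaf) : Inst x g' := by
  induction h with
  | refl => exact hg
  | inst ρ _ ih => exact ih hg.head_all
  | gen _ ih =>
    obtain ⟨ρ, hρ⟩ := hg.exists_of_all hg'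
    exact ih ρ hρ

lemma GenInst.allRecordsHave {x g : GTy} (h : GenInst x g) (hx : AllRecordsHave ℓ x) :
    AllRecordsHave ℓ g := fun f hf => hx f (h.inst_of_isLeaf hf trivial)

lemma GenInst.onlyEmptyRecords {x g : GTy} (h : GenInst x g) (hx : OnlyEmptyRecords x) :
    OnlyEmptyRecords g := fun g' hg hg' => hx g' (h.inst_of_isLeaf hg hg') hg'

end GTy

open GTy

/-- Only label presence matters to the argument, so record fields go untyped. -/
inductive GHasTy : List GTy → UTm → GTy → Prop where
  | var {Γ n g} : Γ[n]? = some g → GHasTy Γ (.var n) g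
  | lam {Γ u s b} : GHasTy (s :: Γ) u b → GHasTy Γ (.lam u) (.arr s b)
  | app {Γ u w s b} : GHasTy Γ u (.arr s b) → GHasTy Γ w s → GHasTy Γ (.app u w) b
  | record {Γ us f} : (∀ ℓ, f ℓ = true → ℓ ∈ us.map Prod.fst) →
      GHasTy Γ (.record us) (.recd f)
  | proj {Γ u f ℓ g} : GHasTy Γ u (.recd f) → f ℓ = true → GHasTy Γ (.proj u ℓ) g
  | gen {Γ u F} : (∀ ρ, GHasTy Γ u (F ρ)) → GHasTy Γ u (.all F)
  | inst {Γ u F} (ρ : Label → Bool) : GHasTy Γ u (.all F) → GHasTy Γ u (F ρ)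

namespace GHasTy

variable {Γ : List GTy} {g : GTy}

lemma var_inv {i : ℕ} {x : GTy} (h : GHasTy Γ (.var i) g) (hx : Γ[i]? = some x) :
    GenInst x g := by
  generalize hu : UTm.var i = u at h
  induction h with
  | var hg => cases hu; cases hx.symm.trans hg; exact .refl
  | gen _ ih => exact .gen fun ρ => ih ρ hx hu
  | inst ρ _ ih => exact .inst ρ (ih hx hu)
  | _ => cases hu

lemma lam_inv {w : UTm} {g' : GTy} (h : GHasTy Γ (.lam w) g) (hg : Inst g g')
    (hg' : g'.IsLeaf) : ∃ s b, g' = .arr s b ∧ GHasTy (s :: Γ) w b := by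
  generalize hu : UTm.lam w = u at h
  induction h with
  | lam hb => cases hu; exact ⟨_, _, hg.eq_of_isLeaf trivial, hb⟩
  | gen _ ih =>
    obtain ⟨ρ, hρ⟩ := hg.exists_of_all hg'
    exact ih ρ hρ hu
  | inst ρ _ ih => exact ih hg.head_all hu
  | _ => cases hu

lemma record_inv {us : List (Label × UTm)} {g' : GTy} (h : GHasTy Γ (.record us) g)
    (hg : Inst g g') (hg' : g'.IsLeaf) :
    ∃ f, g' = .recd f ∧ ∀ ℓ, f ℓ = true → ℓ ∈ us.map Prod.fst := by
  generalize hu : UTm.record us = u at h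
  induction h with
  | record hf => cases hu; exact ⟨_, hg.eq_of_isLeaf trivial, hf⟩
  | gen _ ih =>
    obtain ⟨ρ, hρ⟩ := hg.exists_of_all hg'
    exact ih ρ hρ hu
  | inst ρ _ ih => exact ih hg.head_all hu
  | _ => cases hu

lemma onlyEmptyRecords_of_record_nil (h : GHasTy Γ (.record []) g) : OnlyEmptyRecords g :=
  fun _ hg hg' => by
    obtain ⟨f, rfl, hf⟩ := h.record_inv hg hg'
    congr
    funext ℓ
    simpa using hf ℓ

lemma proj_inv {w : UTm} {ℓ : Label} (h : GHasTy Γ (.proj w ℓ) g) :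
    ∃ f, GHasTy Γ w (.recd f) ∧ f ℓ = true := by
  generalize hu : UTm.proj w ℓ = u at h
  induction h with
  | proj hw hf => cases hu; exact ⟨_, hw, hf⟩
  | gen _ ih => exact ih (fun _ => false) hu
  | inst _ _ ih => exact ih hu
  | _ => cases hu

lemma app_inv {w₁ w₂ : UTm} (h : GHasTy Γ (.app w₁ w₂) g) :
    ∃ s b, GHasTy Γ w₁ (.arr s b) ∧ GHasTy Γ w₂ s := by
  generalize hu : UTm.app w₁ w₂ = u at h
  induction h with
  | app h₁ h₂ => cases hu; exact ⟨_, _, h₁, h₂⟩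
  | gen _ ih => exact ih (fun _ => false) hu
  | inst _ _ ih => exact ih hu
  | _ => cases hu

end GHasTy

/-! ### Interpretation of target types -/

inductive VarKind : Type where
  | pre : VarKind
  | row : VarKind

/-- Index of a variable of kind `κ` once a binder of kind `κ'` is crossed. -/
def VarKind.lift : VarKind → VarKind → ℕ → ℕ
  | .pre, .pre, k => k + 1
  | .row, .row, k => k + 1
  | _, _, k => k

structure Val : Type where
  pre : ℕ → Label → Bool
  row : ℕ → Label → Bool

namespace Val

def ins (v : Val) : VarKind → ℕ → (Label → Bool) → Val
  | .pre, k, ρ => { v with pre := insertAt k ρ v.pre }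
  | .row, k, ρ => { v with row := insertAt k ρ v.row }

def skip (v : Val) : VarKind → ℕ → Val
  | .pre, c => { v with pre := skipAt c v.pre }
  | .row, c => { v with row := skipAt c v.row }

variable (v : Val)

@[simp] lemma ins_pre_pre (k : ℕ) (ρ : Label → Bool) : (v.ins .pre k ρ).pre = insertAt k ρ v.pre :=
  rfl

@[simp] lemma ins_row_row (k : ℕ) (ρ : Label → Bool) : (v.ins .row k ρ).row = insertAt k ρ v.row :=
  rfl

@[simp] lemma skip_row_row (c : ℕ) : (v.skip .row c).row = skipAt c v.row := rfl

@[simp] lemma skip_ins (κ : VarKind) (k : ℕ) (ρ : Label → Bool) : (v.ins κ k ρ).skip κ k = v := by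
  cases κ <;> simp [ins, skip]

lemma ins_ins_zero (κ κ' : VarKind) (k : ℕ) (ρ σ : Label → Bool) :
    (v.ins κ k ρ).ins κ' 0 σ = (v.ins κ' 0 σ).ins κ (κ'.lift κ k) ρ := by
  cases κ <;> cases κ' <;> simp [ins, VarKind.lift, insertAt_zero_insertAt]

lemma skip_ins_zero (κ κ' : VarKind) (c : ℕ) (σ : Label → Bool) :
    (v.skip κ c).ins κ' 0 σ = (v.ins κ' 0 σ).skip κ (κ'.lift κ c) := by
  cases κ <;> cases κ' <;> simp [ins, skip, VarKind.lift, insertAt_zero_skipAt]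

end Val

def denPre (v : Val) : Pre → Label → Bool
  | .abs => fun _ => false
  | .pres => fun _ => true
  | .pvar n => v.pre n

def denEntries (v : Val) (es : List (Label × Pre × RTy)) (ℓ : Label) : Bool :=
  es.any fun q => q.1 == ℓ && denPre v q.2.1 ℓ

def denRow (v : Val) (R : RRow) (ℓ : Label) : Bool :=
  denEntries v R.1 ℓ || R.2.any (v.row · ℓ)

/-- Both quantifiers become `GTy.all`: a presence variable is valued in sets of labels, like a row
variable, which is sound because substituting a presence type acts label by label as well. -/
def den (v : Val) : RTy → GTy
  | .tvar n => .var n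
  | .arrow A B => .arr (den v A) (den v B)
  | .record es r => .recd (denRow v (es, r))
  | .rall _ A => .all fun ρ => den (v.ins .row 0 ρ) A
  | .pall A => .all fun ρ => den (v.ins .pre 0 ρ) A

section Entries

variable (v : Val) (ℓ : Label)

lemma denPre_shiftPre (c : ℕ) (P : Pre) : denPre v (shiftPre c P) = denPre (v.skip .pre c) P := by
  cases P <;> simp only [shiftPre, denPre, Val.skip, skipAt]
  split_ifs <;> rfl

lemma denPre_substPreP (k : ℕ) (P Q : Pre) :
    denPre v (substPreP k P Q) = denPre (v.ins .pre k (denPre v P)) Q := by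
  cases Q <;> simp only [substPreP, denPre, Val.ins, insertAt]
  split_ifs <;> rfl

lemma shiftRowEs_eq_map (c : ℕ) :
    ∀ es, shiftRowEs c es = es.map fun q => (q.1, q.2.1, shiftRowTy c q.2.2)
  | [] => rfl
  | (_, _, _) :: es => by rw [shiftRowEs, shiftRowEs_eq_map c es]; rfl

lemma shiftPreEs_eq_map (c : ℕ) :
    ∀ es, shiftPreEs c es = es.map fun q => (q.1, shiftPre c q.2.1, shiftPreTy c q.2.2)
  | [] => rfl
  | (_, _, _) :: es => by rw [shiftPreEs, shiftPreEs_eq_map c es]; rfl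

lemma substRowEs_eq_map (k : ℕ) (R : RRow) :
    ∀ es, substRowEs k R es = es.map fun q => (q.1, q.2.1, substRowTy k R q.2.2)
  | [] => rfl
  | (_, _, _) :: es => by rw [substRowEs, substRowEs_eq_map k R es]; rfl

lemma substPreEs_eq_map (k : ℕ) (P : Pre) :
    ∀ es, substPreEs k P es =
      es.map fun q => (q.1, substPreP k P q.2.1, substPreTy k P q.2.2)
  | [] => rfl
  | (_, _, _) :: es => by rw [substPreEs, substPreEs_eq_map k P es]; rfl

lemma denEntries_eq_of_pre_eq {v w : Val} (h : v.pre = w.pre) (es : List (Label × Pre × RTy)) :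
    denEntries v es ℓ = denEntries w es ℓ := by
  have : denPre v = denPre w := by
    funext P
    cases P <;> simp [denPre, h]
  simp [denEntries, this]

lemma denEntries_eq_of_map_eq {es es' : List (Label × Pre × RTy)}
    (h : es.map (fun q => (q.1, q.2.1)) = es'.map (fun q => (q.1, q.2.1))) :
    denEntries v es ℓ = denEntries v es' ℓ := by
  have key : ∀ es : List (Label × Pre × RTy), denEntries v es ℓ =
      (es.map fun q => (q.1, q.2.1)).any fun p => p.1 == ℓ && denPre v p.2 ℓ := by
    simp [denEntries, Function.comp_def]
  rw [key, key, h]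

@[simp] lemma denEntries_ins_row (k : ℕ) (ρ : Label → Bool) (es : List (Label × Pre × RTy)) :
    denEntries (v.ins .row k ρ) es ℓ = denEntries v es ℓ :=
  denEntries_eq_of_pre_eq ℓ rfl es

@[simp] lemma denEntries_skip_row (c : ℕ) (es : List (Label × Pre × RTy)) :
    denEntries (v.skip .row c) es ℓ = denEntries v es ℓ :=
  denEntries_eq_of_pre_eq ℓ rfl es

@[simp] lemma denEntries_append (es es' : List (Label × Pre × RTy)) :
    denEntries v (es ++ es') ℓ = (denEntries v es ℓ || denEntries v es' ℓ) := by
  simp [denEntries]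

lemma denEntries_shiftRowEs (c : ℕ) (es : List (Label × Pre × RTy)) :
    denEntries v (shiftRowEs c es) ℓ = denEntries v es ℓ := by
  simp [denEntries, shiftRowEs_eq_map, Function.comp_def]

lemma denEntries_substRowEs (k : ℕ) (R : RRow) (es : List (Label × Pre × RTy)) :
    denEntries v (substRowEs k R es) ℓ = denEntries v es ℓ := by
  simp [denEntries, substRowEs_eq_map, Function.comp_def]

lemma denEntries_shiftPreEs (c : ℕ) (es : List (Label × Pre × RTy)) :
    denEntries v (shiftPreEs c es) ℓ = denEntries (v.skip .pre c) es ℓ := by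
  simp [denEntries, shiftPreEs_eq_map, Function.comp_def, denPre_shiftPre]

lemma denEntries_substPreEs (k : ℕ) (P : Pre) (es : List (Label × Pre × RTy)) :
    denEntries v (substPreEs k P es) ℓ = denEntries (v.ins .pre k (denPre v P)) es ℓ := by
  simp [denEntries, substPreEs_eq_map, Function.comp_def, denPre_substPreP]

lemma denEntries_of_lookup {res : List (Label × Pre × RTy)} {A : RTy}
    (h : res.lookup ℓ = some (.pres, A)) : denEntries v res ℓ = true := by
  obtain ⟨l₁, l₂, rfl, -⟩ := List.lookup_eq_some_iff.mp h
  simp [denEntries, denPre]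

end Entries

theorem den_shiftRowTy : ∀ (A : RTy) (v : Val) (c : ℕ),
    den v (shiftRowTy c A) = den (v.skip .row c) A
  | .tvar _, _, _ => rfl
  | .arrow A B, v, c => by rw [shiftRowTy, den, den, den_shiftRowTy A, den_shiftRowTy B]
  | .record es r, v, c => by
    simp only [shiftRowTy, den, GTy.recd.injEq]
    funext ℓ
    cases r <;> simp [denRow, denEntries_shiftRowEs, skipAt]
  | .rall _ A, v, c => by
    simp only [shiftRowTy, den, den_shiftRowTy A, Val.skip_ins_zero]
    rfl
  | .pall A, v, c => by
    simp only [shiftRowTy, den, den_shiftRowTy A, Val.skip_ins_zero]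
    rfl

theorem den_shiftPreTy : ∀ (A : RTy) (v : Val) (c : ℕ),
    den v (shiftPreTy c A) = den (v.skip .pre c) A
  | .tvar _, _, _ => rfl
  | .arrow A B, v, c => by rw [shiftPreTy, den, den, den_shiftPreTy A, den_shiftPreTy B]
  | .record es r, v, c => by
    simp only [shiftPreTy, den, GTy.recd.injEq]
    funext ℓ
    simp only [denRow, denEntries_shiftPreEs]
    rfl
  | .rall _ A, v, c => by
    simp only [shiftPreTy, den, den_shiftPreTy A, Val.skip_ins_zero]
    rfl
  | .pall A, v, c => by
    simp only [shiftPreTy, den, den_shiftPreTy A, Val.skip_ins_zero]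
    rfl

theorem den_substPreTy : ∀ (A : RTy) (v : Val) (k : ℕ) (P : Pre),
    den v (substPreTy k P A) = den (v.ins .pre k (denPre v P)) A
  | .tvar _, _, _, _ => rfl
  | .arrow A B, v, k, P => by
    rw [substPreTy, den, den, den_substPreTy A, den_substPreTy B]
  | .record es r, v, k, P => by
    simp only [substPreTy, den, GTy.recd.injEq]
    funext ℓ
    simp only [denRow, denEntries_substPreEs]
    rfl
  | .rall _ A, v, k, P => by
    simp only [substPreTy, den, den_substPreTy A, Val.ins_ins_zero]
    rfl
  | .pall A, v, k, P => by
    simp only [substPreTy, den, den_substPreTy A, denPre_shiftPre, Val.skip_ins, Val.ins_ins_zero]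
    rfl

lemma denRow_shiftRowRRow (v : Val) (σ : Label → Bool) (R : RRow) :
    denRow (v.ins .row 0 σ) (shiftRowRRow 0 R) = denRow v R := by
  funext ℓ
  obtain ⟨es, r⟩ := R
  cases r <;> simp [denRow, shiftRowRRow, denEntries_shiftRowEs, insertAt]

lemma denRow_shiftPreRRow (v : Val) (σ : Label → Bool) (R : RRow) :
    denRow (v.ins .pre 0 σ) (shiftPreRRow 0 R) = denRow v R := by
  funext ℓ
  simp only [denRow, shiftPreRRow, denEntries_shiftPreEs, Val.skip_ins]
  rfl

theorem den_substRowTy : ∀ (A : RTy) (v : Val) (k : ℕ) (R : RRow),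
    den v (substRowTy k R A) = den (v.ins .row k (denRow v R)) A
  | .tvar _, _, _, _ => rfl
  | .arrow A B, v, k, R => by
    rw [substRowTy, den, den, den_substRowTy A, den_substRowTy B]
  | .record es none, v, k, R => by
    simp only [substRowTy, den, GTy.recd.injEq]
    funext ℓ
    simp only [denRow, denEntries_substRowEs]
    rfl
  | .record es (some n), v, k, R => by
    simp only [substRowTy]
    split_ifs <;>
    ( simp only [den, GTy.recd.injEq]
      funext ℓ
      simp [denRow, denEntries_substRowEs, insertAt, Bool.or_assoc, *] )
  | .rall _ A, v, k, R => by
    simp only [substRowTy, den, den_substRowTy A, denRow_shiftRowRRow, Val.ins_ins_zero]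
    rfl
  | .pall A, v, k, R => by
    simp only [substRowTy, den, den_substRowTy A, denRow_shiftPreRRow, Val.ins_ins_zero]
    rfl

theorem den_congr {A B : RTy} (h : TyEquiv A B) (v : Val) : den v A = den v B := by
  induction h generalizing v with
  | refl => rfl
  | symm _ ih => exact (ih v).symm
  | trans _ _ ih₁ ih₂ => exact (ih₁ v).trans (ih₂ v)
  | arrow _ _ ih₁ ih₂ => simp only [den, ih₁, ih₂]
  | rall _ ih => simp only [den, ih]
  | pall _ ih => simp only [den, ih]
  | recordCongr hmap =>
    simp only [den, GTy.recd.injEq]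
    funext ℓ
    simp only [denRow, denEntries_eq_of_map_eq v ℓ hmap]
  | recordPerm hperm =>
    simp only [den, GTy.recd.injEq]
    funext ℓ
    simp only [denRow, denEntries, hperm.any_eq]
  | recordAbsent =>
    simp only [den, GTy.recd.injEq]
    funext ℓ
    simp [denRow, denEntries, denPre]

lemma map_fst_eraseTEs : ∀ es : List (Label × RTm), (eraseTEs es).map Prod.fst = es.map Prod.fst
  | [] => rfl
  | (_, _) :: es => by rw [eraseTEs, List.map_cons, List.map_cons, map_fst_eraseTEs es]

lemma den_ctx_shiftRowTy (v : Val) (ρ : Label → Bool) (Γ : List RTy) :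
    (Γ.map (shiftRowTy 0)).map (den (v.ins .row 0 ρ)) = Γ.map (den v) := by
  simp [Function.comp_def, den_shiftRowTy]

lemma den_ctx_shiftPreTy (v : Val) (ρ : Label → Bool) (Γ : List RTy) :
    (Γ.map (shiftPreTy 0)).map (den (v.ins .pre 0 ρ)) = Γ.map (den v) := by
  simp [Function.comp_def, den_shiftPreTy]

theorem RHasTy.sound {Γ : List RTy} {M : RTm} {A : RTy} (h : RHasTy Γ M A) (v : Val) :
    GHasTy (Γ.map (den v)) (eraseT M) (den v A) := by
  induction h generalizing v with
  | var h => exact .var (by simp [h])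
  | lam _ ih => exact .lam (ih v)
  | app _ _ ih₁ ih₂ => exact .app (ih₁ v) (ih₂ v)
  | record hlab _ _ =>
    refine .record fun ℓ hℓ => ?_
    simp only [denRow, Option.any_none, Bool.or_false, denEntries, List.any_eq_true,
      Bool.and_eq_true, beq_iff_eq] at hℓ
    obtain ⟨q, hq, rfl, -⟩ := hℓ
    rw [map_fst_eraseTEs, hlab]
    exact List.mem_map_of_mem hq
  | proj _ hlk ih => exact .proj (ih v) (by simp [denRow, denEntries_of_lookup v _ hlk])
  | rlam _ ih =>
    refine .gen fun ρ => ?_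
    have := ih (v.ins .row 0 ρ)
    rwa [den_ctx_shiftRowTy] at this
  | rapp _ ih =>
    rw [den_substRowTy]
    exact .inst _ (ih v)
  | plam _ ih =>
    refine .gen fun ρ => ?_
    have := ih (v.ins .pre 0 ρ)
    rwa [den_ctx_shiftPreTy] at this
  | papp _ ih =>
    rw [den_substPreTy]
    exact .inst _ (ih v)
  | conv _ heq ih => exact den_congr heq v ▸ ih v

/-! ### Presence through a variable -/

/-- The record at the core of `A`, below its quantifiers, makes `ℓ` present through the variable
`(κ, k)`, by an entry or by its row tail. -/
def PresentVia (ℓ : Label) (κ : VarKind) : ℕ → RTy → Prop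
  | k, .record es r =>
    match κ with
    | .pre => ∃ T, (ℓ, .pvar k, T) ∈ es
    | .row => r = some k
  | k, .rall _ A => PresentVia ℓ κ (VarKind.row.lift κ k) A
  | k, .pall A => PresentVia ℓ κ (VarKind.pre.lift κ k) A
  | _, _ => False

section Transfer

variable {ℓ : Label} {ρ ρ' : Label → Bool}

lemma den_ins_rall (v : Val) (κ : VarKind) (k : ℕ) (L : List Label) (A : RTy) :
    den (v.ins κ k ρ) (.rall L A) =
      .all fun σ => den ((v.ins .row 0 σ).ins κ (VarKind.row.lift κ k) ρ) A := by
  simp only [den, Val.ins_ins_zero]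

lemma den_ins_pall (v : Val) (κ : VarKind) (k : ℕ) (A : RTy) :
    den (v.ins κ k ρ) (.pall A) =
      .all fun σ => den ((v.ins .pre 0 σ).ins κ (VarKind.pre.lift κ k) ρ) A := by
  simp only [den, Val.ins_ins_zero]

theorem allRecordsHave_den_of_presentVia (hρ : ρ ℓ = true) :
    ∀ (S : RTy) (v : Val) (κ : VarKind) (k : ℕ), PresentVia ℓ κ k S →
      AllRecordsHave ℓ (den (v.ins κ k ρ) S)
  | .record es r, v, .pre, k, ⟨T, hT⟩ => allRecordsHave_recd <| by
    simp only [denRow, denEntries, Bool.or_eq_true, List.any_eq_true]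
    exact .inl ⟨_, hT, by simp [denPre, hρ]⟩
  | .record es r, v, .row, k, (hr : r = some k) => allRecordsHave_recd <| by simp [denRow, hr, hρ]
  | .rall _ A, v, κ, k, h => by
    rw [den_ins_rall]
    exact allRecordsHave_all fun σ => allRecordsHave_den_of_presentVia hρ A _ κ _ h
  | .pall A, v, κ, k, h => by
    rw [den_ins_pall]
    exact allRecordsHave_all fun σ => allRecordsHave_den_of_presentVia hρ A _ κ _ h

lemma denRow_ins_of_not_presentVia {v : Val} {κ : VarKind} {k : ℕ}
    {es : List (Label × Pre × RTy)} {r : Option ℕ}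
    (h : ¬ PresentVia ℓ κ k (.record es r) ∨ ρ ℓ = false)
    (hℓ : denRow (v.ins κ k ρ) (es, r) ℓ = true) : denRow (v.ins κ k ρ') (es, r) ℓ = true := by
  cases κ with
  | pre =>
    simp only [denRow, denEntries, Bool.or_eq_true, List.any_eq_true, Bool.and_eq_true,
      beq_iff_eq] at hℓ ⊢
    rcases hℓ with ⟨⟨ℓ', P, T⟩, hq, rfl, hP⟩ | hr
    · refine .inl ⟨_, hq, rfl, ?_⟩
      cases P with
      | pvar n =>
        by_cases hn : n = k
        · subst hn
          simp only [denPre, Val.ins_pre_pre, insertAt_self] at hP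
          exact h.elim (fun h' => (h' ⟨T, hq⟩).elim) (fun h' => by simp [h'] at hP)
        · simpa [denPre, insertAt_of_ne hn ρ' ρ] using hP
      | _ => exact hP
    · exact .inr hr
  | row =>
    simp only [denRow, Bool.or_eq_true, Val.ins_row_row, denEntries_ins_row] at hℓ ⊢
    refine hℓ.imp_right fun hr => ?_
    cases r with
    | none => simp at hr
    | some m =>
      by_cases hm : m = k
      · subst hm
        simp only [Option.any_some, insertAt_self] at hr
        exact h.elim (fun h' => (h' rfl).elim) (fun h' => by simp [h'] at hr)
      · simpa [insertAt_of_ne hm ρ' ρ] using hr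

theorem someRecordHas_den_ins :
    ∀ (S : RTy) (v : Val) (κ : VarKind) (k : ℕ), (¬ PresentVia ℓ κ k S ∨ ρ ℓ = false) →
      SomeRecordHas ℓ (den (v.ins κ k ρ) S) → SomeRecordHas ℓ (den (v.ins κ k ρ') S)
  | .tvar _, _, _, _, _, ⟨_, hf, _⟩ => by cases hf.eq_of_isLeaf trivial
  | .arrow _ _, _, _, _, _, ⟨_, hf, _⟩ => by cases hf.eq_of_isLeaf trivial
  | .record es r, v, κ, k, h, hs =>
    someRecordHas_recd.mpr (denRow_ins_of_not_presentVia h (someRecordHas_recd.mp hs))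
  | .rall _ A, v, κ, k, h, hs => by
    rw [den_ins_rall, someRecordHas_all] at hs ⊢
    obtain ⟨σ, hσ⟩ := hs
    exact ⟨σ, someRecordHas_den_ins A _ κ _ h hσ⟩
  | .pall A, v, κ, k, h, hs => by
    rw [den_ins_pall, someRecordHas_all] at hs ⊢
    obtain ⟨σ, hσ⟩ := hs
    exact ⟨σ, someRecordHas_den_ins A _ κ _ h hσ⟩

theorem arrow_inst_transfer {s b : GTy} :
    ∀ (A : RTy) (v : Val) (κ : VarKind) (k : ℕ), Inst (den (v.ins κ k ρ) A) (.arr s b) →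
      SomeRecordHas ℓ s → AllRecordsHave ℓ s ∨
        ∃ s' b', Inst (den (v.ins κ k ρ') A) (.arr s' b') ∧ SomeRecordHas ℓ s'
  | .tvar _, _, _, _, h, _ => by cases h.eq_of_isLeaf trivial
  | .record _ _, _, _, _, h, _ => by cases h.eq_of_isLeaf trivial
  | .arrow S _, v, κ, k, h, hs => by
    cases h.eq_of_isLeaf trivial
    by_cases hS : PresentVia ℓ κ k S ∧ ρ ℓ = true
    · exact .inl (allRecordsHave_den_of_presentVia hS.2 S v κ k hS.1)
    · rw [not_and_or, Bool.not_eq_true] at hS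
      exact .inr ⟨_, _, .refl, someRecordHas_den_ins S v κ k hS hs⟩
  | .rall _ A, v, κ, k, h, hs => by
    rw [den_ins_rall] at h
    obtain ⟨σ, hσ⟩ := h.exists_of_all trivial
    refine (arrow_inst_transfer A _ κ _ hσ hs).imp_right fun ⟨s', b', h', hs'⟩ => ?_
    exact ⟨s', b', by rw [den_ins_rall]; exact h'.head_all, hs'⟩
  | .pall A, v, κ, k, h, hs => by
    rw [den_ins_pall] at h
    obtain ⟨σ, hσ⟩ := h.exists_of_all trivial
    refine (arrow_inst_transfer A _ κ _ hσ hs).imp_right fun ⟨s', b', h', hs'⟩ => ?_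
    exact ⟨s', b', by rw [den_ins_pall]; exact h'.head_all, hs'⟩

end Transfer

theorem den_arrow_insts_incompatible {ℓ : Label} : ∀ (A : RTy) (v : Val),
    (∀ s b, Inst (den v A) (.arr s b) → ¬ AllRecordsHave ℓ s) →
    (∃ s b, Inst (den v A) (.arr s b) ∧ OnlyEmptyRecords s) →
    ¬ ∃ s b, Inst (den v A) (.arr s b) ∧ SomeRecordHas ℓ s
  | .tvar _, _, _, ⟨_, _, h, _⟩, _ => by cases h.eq_of_isLeaf trivial
  | .record _ _, _, _, ⟨_, _, h, _⟩, _ => by cases h.eq_of_isLeaf trivial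
  | .arrow _ _, _, _, ⟨_, _, h, he⟩, ⟨_, _, h', hs⟩ => by
    cases h.eq_of_isLeaf trivial
    cases h'.eq_of_isLeaf trivial
    exact he.not_someRecordHas hs
  | .rall _ A, v, hdom, ⟨s, b, h, he⟩, ⟨s', b', h', hs⟩ => by
    obtain ⟨σ, hσ⟩ := h.exists_of_all trivial
    obtain ⟨σ', hσ'⟩ := h'.exists_of_all trivial
    have hσ' : Inst (den (v.ins .row 0 σ') A) (.arr s' b') := hσ'
    rcases arrow_inst_transfer (ρ' := σ) A v .row 0 hσ' hs with hall | hsome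
    · exact hdom s' b' h' hall
    · exact den_arrow_insts_incompatible A _ (fun s b h => hdom s b h.head_all) ⟨s, b, hσ, he⟩
        hsome
  | .pall A, v, hdom, ⟨s, b, h, he⟩, ⟨s', b', h', hs⟩ => by
    obtain ⟨σ, hσ⟩ := h.exists_of_all trivial
    obtain ⟨σ', hσ'⟩ := h'.exists_of_all trivial
    have hσ' : Inst (den (v.ins .pre 0 σ') A) (.arr s' b') := hσ'
    rcases arrow_inst_transfer (ρ' := σ) A v .pre 0 hσ' hs with hall | hsome
    · exact hdom s' b' h' hall
    · exact den_arrow_insts_incompatible A _ (fun s b h => hdom s b h.head_all) ⟨s, b, hσ, he⟩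
        hsome

section Typings

variable {ℓ : Label}

lemma not_allRecordsHave_of_id_of_const {t s b : GTy}
    (hid : GHasTy [] (.lam (.var 0)) t) (hconst : GHasTy [] (.lam (.record [])) t)
    (h : Inst t (.arr s b)) : ¬ AllRecordsHave ℓ s := fun hs => by
  obtain ⟨_, _, he, hb⟩ := hid.lam_inv h trivial
  obtain ⟨_, _, he', hb'⟩ := hconst.lam_inv h trivial
  cases he; cases he'
  have hb_all : AllRecordsHave ℓ b := (hb.var_inv rfl).allRecordsHave hs
  obtain ⟨g, hg, hleaf⟩ := exists_inst_isLeaf b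
  cases hb'.onlyEmptyRecords_of_record_nil g hg hleaf
  cases hb_all _ hg

lemma exists_arrow_inst_onlyEmptyRecords {t e g : GTy}
    (happ : GHasTy [t, e] (.app (.var 0) (.var 1)) g) (he : GHasTy [] (.record []) e) :
    ∃ s b, Inst t (.arr s b) ∧ OnlyEmptyRecords s := by
  obtain ⟨s, b, hf, hx⟩ := happ.app_inv
  exact ⟨s, b, (hf.var_inv rfl).inst_of_isLeaf .refl trivial,
    (hx.var_inv rfl).onlyEmptyRecords he.onlyEmptyRecords_of_record_nil⟩

lemma exists_arrow_inst_someRecordHas {t u : GTy} (hup : GHasTy [t] (.var 0) u)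
    (hproj : GHasTy [] (.lam (.proj (.var 0) ℓ)) u) :
    ∃ s b, Inst t (.arr s b) ∧ SomeRecordHas ℓ s := by
  obtain ⟨g, hg, hleaf⟩ := exists_inst_isLeaf u
  obtain ⟨s, b, rfl, hb⟩ := hproj.lam_inv hg hleaf
  obtain ⟨f, hx, hf⟩ := hb.proj_inv
  exact ⟨s, b, (hup.var_inv rfl).inst_of_isLeaf hg hleaf,
    f, (hx.var_inv rfl).inst_of_isLeaf .refl trivial, hf⟩

end Typings

theorem no_type_only_encoding :
    ¬ ∃ (trTy : Ty → RTy)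
        (trD : ∀ (Γ : List Ty) (M : Tm) (A : Ty), Deriv Γ M A → RTm),
      (∀ Γ M A (d : Deriv Γ M A), RHasTy (Γ.map trTy) (trD Γ M A d) (trTy A)) ∧
      (∀ Γ M A (d : Deriv Γ M A), eraseT (trD Γ M A d) = eraseS M) := by
  rintro ⟨trTy, trD, hty, her⟩
  let v : Val := ⟨fun _ _ => false, fun _ _ => false⟩
  have model : ∀ Γ M A, Deriv Γ M A →
      GHasTy ((Γ.map trTy).map (den v)) (eraseS M) (den v (trTy A)) :=
    fun Γ M A d => her Γ M A d ▸ (hty Γ M A d).sound v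
  let E : Ty := .record []
  let L : Ty := .record [(0, E)]
  have hsub : Sub (.arrow E E) (.arrow L E) :=
    .arrow (.record (fun _ _ h => by simp at h) (fun _ _ _ _ h => by simp at h))
      (.record (fun _ _ h => by simp at h) (fun _ _ _ _ h => by simp at h))
  exact den_arrow_insts_incompatible (trTy (.arrow E E)) v
    (fun _ _ => not_allRecordsHave_of_id_of_const (ℓ := 0)
      (model [] _ _ (.lam (.var rfl))) (model [] _ _ (.lam (.record .nil))))
    (exists_arrow_inst_onlyEmptyRecords
      (model [.arrow E E, E] _ _ (.app (.var rfl) (.var rfl))) (model [] _ _ (.record .nil)))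
    (exists_arrow_inst_someRecordHas (model [.arrow E E] _ _ (.upcast (.var rfl) hsub))
      (model [] (.lam L (.proj (.var 0) 0)) _ (.lam (.proj (.var rfl) rfl))))

end Stmt19
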